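/- Let q0 be an odd prime power with q0 ≡ 7 (mod 8), let F be a finite field with q0² elements, K the unique subfield of F with q0 elements, and H the unique subgroup of Fˣ of order q0+1. Then: (1) every μ ∈ F can be written as μ = c1·h1 + c2·h2 with c1, c2 ∈ K and h1, h2 ∈ H; and (2) there exists μ ∈ F such that μ ≠ c·h for all c ∈ K and h ∈ H. Equivalently, the covering radius of the generalized Zetterberg code C_1(q0) is exactly 2. -/

import Mathlib

/-!
The products `c * h` with `c ∈ K`, `h ∈ H` are exactly the squares of `F`. A square `y ^ 2` is the
product of the norm `y ^ (q + 1) ∈ K` and `y ^ (1 - q) ∈ H`. Conversely, for odd `q` the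
relations `c ^ (q - 1) = 1` and `h ^ (q + 1) = 1` make `c` and `h` pass Euler's criterion
`x ^ ((q ^ 2 - 1) / 2) = 1`. Every element of a finite field is a sum of two squares, and in
odd characteristic some element is not a square.
-/

open Polynomial

theorem Subfield.mem_iff_pow_card_eq_self {F : Type*} [Field F] (K : Subfield F) [Finite K]
    {x : F} : x ∈ K ↔ x ^ Nat.card K = x := by
  have := Fintype.ofFinite K
  rw [Nat.card_eq_fintype_card]
  refine ⟨fun hx => congrArg Subtype.val (FiniteField.pow_card (⟨x, hx⟩ : K)), fun hx => ?_⟩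
  -- `X ^ q - X` splits over `K` into distinct linear factors, so its roots in `F` all lie in `K`.
  have hroots : ((X ^ Fintype.card K - X : K[X]).roots).map K.subtype =
      ((X ^ Fintype.card K - X : K[X]).map K.subtype).roots := by
    refine roots_map_of_injective_of_card_eq_natDegree K.subtype.injective ?_
    rw [FiniteField.roots_X_pow_card_sub_X,
      FiniteField.X_pow_card_sub_X_natDegree_eq K Fintype.one_lt_card]
    rfl
  have hx_root : x ∈ ((X ^ Fintype.card K - X : K[X]).map K.subtype).roots := by
    rw [mem_roots (by simpa using FiniteField.X_pow_card_sub_X_ne_zero F Fintype.one_lt_card)]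
    simp [hx]
  rw [← hroots] at hx_root
  obtain ⟨y, -, rfl⟩ := Multiset.mem_map.1 hx_root
  exact y.2

theorem Subgroup.eq_rootsOfUnity_card {R : Type*} [CommRing R] [IsDomain R] (H : Subgroup Rˣ)
    [Finite H] : H = rootsOfUnity (Nat.card H) R :=
  eq_of_le_of_card_ge
    (fun u hu => (mem_rootsOfUnity _ u).2 (congrArg Subtype.val (pow_card_eq_one' (x := ⟨u, hu⟩))))
    (card_rootsOfUnity _ _)

theorem FiniteField.exists_sq_add_sq {F : Type*} [Field F] [Fintype F] (x : F) :
    ∃ a b : F, x = a ^ 2 + b ^ 2 := by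
  by_cases hF : ringChar F = 2
  · obtain ⟨a, ha⟩ := isSquare_of_char_two hF x
    exact ⟨a, 0, by rw [ha]; ring⟩
  · obtain ⟨a, b, hab⟩ := exists_root_sum_quadratic
      (degree_X_pow_sub_C (by norm_num : 0 < 2) x) (degree_X_pow (R := F) 2)
      (odd_card_of_char_ne_two hF)
    refine ⟨a, b, ?_⟩
    simp only [eval_sub, eval_pow, eval_X, eval_C] at hab
    linear_combination -hab

theorem FiniteField.ringChar_ne_two_of_odd_card {F : Type*} [Field F] [Fintype F]
    (h : Odd (Fintype.card F)) : ringChar F ≠ 2 := fun h2 =>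
  Nat.not_even_iff_odd.2 h (Nat.even_iff.2 (even_card_of_char_two h2))

section Zetterberg

variable {F : Type*} [Field F] [Fintype F] {q : ℕ} (hF : Fintype.card F = q ^ 2)
  {K : Subfield F} (hK : Nat.card K = q) {H : Subgroup Fˣ} (hH : Nat.card H = q + 1)

include hK in
theorem mem_subfield_iff_pow_eq_self {x : F} : x ∈ K ↔ x ^ q = x := by
  rw [← hK, K.mem_iff_pow_card_eq_self]

include hH in
theorem mem_subgroup_iff_pow_eq_one {u : Fˣ} : u ∈ H ↔ (u : F) ^ (q + 1) = 1 := by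
  rw [H.eq_rootsOfUnity_card, hH, mem_rootsOfUnity']

include hF hK hH in
theorem exists_mem_mul_of_isSquare {x : F} (hx : IsSquare x) :
    ∃ c ∈ K, ∃ h ∈ H, x = c * (h : F) := by
  obtain ⟨y, rfl⟩ := hx
  by_cases hy : y = 0
  · exact ⟨0, K.zero_mem, 1, H.one_mem, by simp [hy]⟩
  have hy_frob : y ^ q ^ 2 = y := hF ▸ FiniteField.pow_card y
  refine ⟨y ^ (q + 1), ?_, Units.mk0 (y * y / y ^ (q + 1)) (by simp [hy]), ?_, ?_⟩
  · rw [mem_subfield_iff_pow_eq_self hK]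
    calc (y ^ (q + 1)) ^ q = y ^ q ^ 2 * y ^ q := by ring
      _ = y ^ (q + 1) := by rw [hy_frob]; ring
  · rw [mem_subgroup_iff_pow_eq_one hH, Units.val_mk0, div_pow, div_eq_one_iff_eq (by simp [hy])]
    calc (y * y) ^ (q + 1) = y * y ^ (2 * q + 1) := by ring
      _ = y ^ q ^ 2 * y ^ (2 * q + 1) := by rw [hy_frob]
      _ = (y ^ (q + 1)) ^ (q + 1) := by ring
  · simp only [Units.val_mk0]
    field_simp

include hF hK hH in
theorem isSquare_mul_of_mem (hq : Odd q) {c : F} (hc : c ∈ K) {h : Fˣ} (hh : h ∈ H) :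
    IsSquare (c * (h : F)) := by
  have hchar := FiniteField.ringChar_ne_two_of_odd_card (hF ▸ hq.pow)
  obtain ⟨m, rfl⟩ := hq
  have hhalf : Fintype.card F / 2 = 2 * m * (m + 1) := by
    rw [hF, show (2 * m + 1) ^ 2 = 2 * (2 * m * (m + 1)) + 1 by ring]
    omega
  refine IsSquare.mul ?_ ?_
  · by_cases hc0 : c = 0
    · exact hc0 ▸ IsSquare.zero
    have hc1 : c ^ (2 * m) = 1 := by
      have := (mem_subfield_iff_pow_eq_self hK).1 hc
      rw [pow_succ] at this
      exact (mul_eq_right₀ hc0).1 this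
    rw [FiniteField.isSquare_iff hchar hc0, hhalf, pow_mul, hc1, one_pow]
  · have hh1 := (mem_subgroup_iff_pow_eq_one hH).1 hh
    rw [FiniteField.isSquare_iff hchar h.ne_zero, hhalf,
      show 2 * m * (m + 1) = (2 * m + 1 + 1) * m by ring, pow_mul, hh1, one_pow]

end Zetterberg

theorem covering_radius_eq_two_of_s_eq_one_general (q0 : ℕ)
    (hq0odd : Odd q0)
    (F : Type*) [Field F] [Fintype F] (hF : Fintype.card F = q0 ^ 2)
    (K : Subfield F) (hK : Nat.card K = q0)
    (H : Subgroup Fˣ) (hH : Nat.card H = q0 + 1) :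
    (∀ μ : F, ∃ c1 c2 : F, c1 ∈ K ∧ c2 ∈ K ∧
        ∃ h1 h2 : Fˣ, h1 ∈ H ∧ h2 ∈ H ∧ μ = c1 * (h1 : F) + c2 * (h2 : F)) ∧
      (∃ μ : F, ∀ c : F, c ∈ K → ∀ h : Fˣ, h ∈ H → μ ≠ c * (h : F)) := by
  refine ⟨fun μ => ?_, ?_⟩
  · obtain ⟨a, b, rfl⟩ := FiniteField.exists_sq_add_sq μ
    obtain ⟨c1, hc1, h1, hh1, ha⟩ := exists_mem_mul_of_isSquare hF hK hH (IsSquare.sq a)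
    obtain ⟨c2, hc2, h2, hh2, hb⟩ := exists_mem_mul_of_isSquare hF hK hH (IsSquare.sq b)
    exact ⟨c1, c2, hc1, hc2, h1, h2, hh1, hh2, by rw [ha, hb]⟩
  · obtain ⟨μ, hμ⟩ := FiniteField.exists_nonsquare
      (FiniteField.ringChar_ne_two_of_odd_card (hF ▸ hq0odd.pow))
    exact ⟨μ, fun c hc h hh hμ_eq => hμ (hμ_eq ▸ isSquare_mul_of_mem hF hK hH hq0odd hc hh)⟩

/-- For `q0 ≡ 7 (mod 8)` an odd prime power, the covering radius of the
generalized Zetterberg code `C_1(q0)` is exactly `2`: every `μ ∈ F` is of the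
form `c1·h1 + c2·h2` with `ci ∈ K`, `hi ∈ H`, and some `μ ∈ F` is not of the
form `c·h`. -/
theorem covering_radius_eq_two_of_s_eq_one (q0 : ℕ) (hq0 : IsPrimePow q0)
    (hq0odd : Odd q0) (hq07 : q0 % 8 = 7)
    (F : Type*) [Field F] [Fintype F] (hF : Fintype.card F = q0 ^ 2)
    (K : Subfield F) (hK : Nat.card K = q0)
    (H : Subgroup Fˣ) (hH : Nat.card H = q0 + 1) :
    (∀ μ : F, ∃ c1 c2 : F, c1 ∈ K ∧ c2 ∈ K ∧
        ∃ h1 h2 : Fˣ, h1 ∈ H ∧ h2 ∈ H ∧ μ = c1 * (h1 : F) + c2 * (h2 : F)) ∧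
      (∃ μ : F, ∀ c : F, c ∈ K → ∀ h : Fˣ, h ∈ H → μ ≠ c * (h : F)) :=
  covering_radius_eq_two_of_s_eq_one_general q0 hq0odd F hF K hK H hH
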